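/- Let λ̂_k = −2^{−n}·Σ_{t=0}^{n−1} (K_t^{(n−1)}(k−1))² for k = 1,…,n. If n is even, then λ̂_i = λ̂_{n−i+1} for i = 1,…,n/2. If n is odd, then λ̂_{(n+1)/2 − i} = λ̂_{(n+1)/2 + i} for i = 1,…,(n−1)/2, and max_{1 ≤ k ≤ n} λ̂_k = λ̂_{(n+1)/2} = −2^{−n}·C(n−1, (n−1)/2). -/

import Mathlib

/-- The Krawtchouk polynomial `K_k^{(n)}(x) = Σ_{i=0}^k (−1)^i·C(x,i)·C(n−x,k−i)`. -/
def kraw (n k x : ℕ) : ℤ :=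
  ∑ i ∈ Finset.range (k + 1),
    (-1 : ℤ) ^ i * (Nat.choose x i : ℤ) * (Nat.choose (n - x) (k - i) : ℤ)

/-- `λ̂_k = −2^{−n}·Σ_{t=0}^{n−1} (K_t^{(n−1)}(k−1))²` for `k = 1,…,n`. -/
noncomputable def lamHat (n k : ℕ) : ℝ :=
  -((2 : ℝ) ^ n)⁻¹ * ∑ t ∈ Finset.range n, ((kraw (n - 1) t (k - 1) : ℝ)) ^ 2

/-! `K_t^{(n)}(x)` is the coefficient of `X^t` in `(1 - X)^x (1 + X)^(n - x)`. Reversing this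
polynomial multiplies it by `(-1)^x`, so `S(x) = Σ_t K_t^{(n)}(x)^2` is `(-1)^x` times the middle
coefficient of `(1 - X)^(2x) (1 + X)^(2n - 2x)`. The three-term recurrence of the Krawtchouk
polynomials turns this into `(2n - 2x - 1) S(x + 1) = (2x + 1) S(x)`, so `S` decreases up to the
middle, where the square is `(1 - X^2)^n` and `S = C(n, n/2)`; substituting `-X` for `X` gives
`S(n - x) = S(x)`. Since `λ̂_{k+1} = -2^{-(n+1)} S(k)` for `K^{(n)}`, `λ̂` is largest where `S` is
smallest. -/

open Polynomial

namespace Polynomial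

variable {R : Type*}

theorem coeff_comp_neg_X [CommRing R] (p : R[X]) (n : ℕ) :
    (p.comp (-X)).coeff n = (-1) ^ n * p.coeff n := by
  rw [← neg_one_mul (X : R[X]), ← C_1, ← C_neg, comp_C_mul_X_coeff, mul_comm]

theorem coeff_one_sub_X_pow [CommRing R] (n k : ℕ) :
    ((1 - X : R[X]) ^ n).coeff k = (-1) ^ k * n.choose k := by
  have : (1 - X : R[X]) ^ n = ((1 + X) ^ n).comp (-X) := by simp [sub_eq_add_neg]
  rw [this, coeff_comp_neg_X, coeff_one_add_X_pow]

theorem reflect_pow [Semiring R] {p : R[X]} {N : ℕ} (hp : p.natDegree ≤ N) (k : ℕ) :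
    reflect (k * N) (p ^ k) = reflect N p ^ k := by
  induction k with
  | zero => simp [reflect_one]
  | succ k ih =>
    rw [pow_succ, pow_succ, add_mul, one_mul, reflect_mul _ _ (natDegree_pow_le_of_le k hp) hp, ih]

theorem coeff_X_mul_derivative [Semiring R] (p : R[X]) (k : ℕ) :
    (X * derivative p).coeff k = k * p.coeff k := by
  cases k with
  | zero => simp
  | succ k => rw [coeff_X_mul, coeff_derivative, Nat.cast_comm]; push_cast; rfl

theorem mul_derivative_pow [CommSemiring R] (p : R[X]) (n : ℕ) :
    p * derivative (p ^ n) = n * derivative p * p ^ n := by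
  cases n with
  | zero => simp
  | succ n => rw [derivative_pow_succ, pow_succ, ← Nat.cast_succ, C_eq_natCast]; ring

end Polynomial

noncomputable def krawGen (n x : ℕ) : ℤ[X] := (1 - X) ^ x * (1 + X) ^ (n - x)

theorem coeff_krawGen (n x k : ℕ) : (krawGen n x).coeff k = kraw n k x := by
  rw [krawGen, coeff_mul, Finset.Nat.sum_antidiagonal_eq_sum_range_succ_mk, kraw]
  refine Finset.sum_congr rfl fun i _ => ?_
  rw [coeff_one_sub_X_pow, coeff_one_add_X_pow, mul_assoc]

theorem reflect_krawGen {n x : ℕ} (hx : x ≤ n) :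
    reflect n (krawGen n x) = (-1) ^ x * krawGen n x := by
  have h1 : reflect 1 (1 - X : ℤ[X]) = -(1 - X) := by
    simp [reflect_one, sub_eq_add_neg]
  have h2 : reflect 1 (1 + X : ℤ[X]) = 1 + X := by
    simp [reflect_add, reflect_one, add_comm]
  have h1' : (1 - X : ℤ[X]).natDegree ≤ 1 := by compute_degree!
  have h2' : (1 + X : ℤ[X]).natDegree ≤ 1 := by compute_degree!
  have := reflect_mul _ _ (natDegree_pow_le_of_le x h1') (natDegree_pow_le_of_le (n - x) h2')
  rw [reflect_pow h1', reflect_pow h2', h1, h2, mul_one, mul_one, Nat.add_sub_cancel' hx] at this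
  rw [krawGen, this, neg_pow]
  ring

theorem kraw_reflect_degree {n x k : ℕ} (hx : x ≤ n) (hk : k ≤ n) :
    kraw n (n - k) x = (-1) ^ x * kraw n k x := by
  have := congrArg (coeff · k) (reflect_krawGen hx)
  simp only [coeff_reflect, revAt_le hk, coeff_krawGen] at this
  rw [this, ← C_1, ← C_neg, ← C_pow, coeff_C_mul, coeff_krawGen]

theorem kraw_reflect_point {n x : ℕ} (hx : x ≤ n) (k : ℕ) :
    kraw n k (n - x) = (-1) ^ k * kraw n k x := by
  have : krawGen n (n - x) = (krawGen n x).comp (-X) := by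
    simp [krawGen, Nat.sub_sub_self hx, sub_eq_add_neg, mul_comm]
  rw [← coeff_krawGen, this, coeff_comp_neg_X, coeff_krawGen]

/-- The differential equation `(1 - X^2) G' = ((n - 2x) - n X) G`, multiplied by `X` so that
comparing coefficients needs no index subtraction. -/
theorem krawGen_euler {n x : ℕ} (hx : x ≤ n) :
    (1 - X ^ 2) * (X * derivative (krawGen n x))
      = X * (C ((n : ℤ) - 2 * x) - C (n : ℤ) * X) * krawGen n x := by
  have ha := mul_derivative_pow (1 - X : ℤ[X]) x
  have hb := mul_derivative_pow (1 + X : ℤ[X]) (n - x)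
  simp only [derivative_sub, derivative_add, derivative_one, derivative_X, Nat.cast_sub hx] at ha hb
  simp only [krawGen, derivative_mul, map_sub, map_mul, C_eq_natCast, map_ofNat]
  linear_combination (X * (1 + X) * (1 + X) ^ (n - x)) * ha + (X * (1 - X) * (1 - X) ^ x) * hb

theorem kraw_add_two {n x : ℕ} (hx : x ≤ n) (k : ℕ) :
    ((k : ℤ) + 2) * kraw n (k + 2) x
      = ((n : ℤ) - 2 * x) * kraw n (k + 1) x - ((n : ℤ) - k) * kraw n k x := by
  have h := congrArg (coeff · (k + 1 + 1)) (show
      X * derivative (krawGen n x) - X * (X * (X * derivative (krawGen n x)))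
        = C ((n : ℤ) - 2 * x) * (X * krawGen n x) - C (n : ℤ) * (X * (X * krawGen n x)) by
    linear_combination krawGen_euler hx)
  simp only [coeff_sub, coeff_C_mul, coeff_X_mul, coeff_X_mul_derivative, coeff_derivative,
    coeff_krawGen] at h
  push_cast at h
  linear_combination h

def krawSqSum (n x : ℕ) : ℤ := ∑ t ∈ Finset.range (n + 1), kraw n t x ^ 2

theorem krawSqSum_nonneg (n x : ℕ) : 0 ≤ krawSqSum n x :=
  Finset.sum_nonneg fun _ _ => sq_nonneg _

theorem krawSqSum_eq_coeff_sq {n x : ℕ} (hx : x ≤ n) :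
    krawSqSum n x = (-1) ^ x * (krawGen n x ^ 2).coeff n := by
  rw [pow_two, coeff_mul, Finset.Nat.sum_antidiagonal_eq_sum_range_succ_mk, Finset.mul_sum]
  refine Finset.sum_congr rfl fun t ht => ?_
  have hsign : (-1 : ℤ) ^ x * (-1) ^ x = 1 := by rw [← pow_add, Even.neg_one_pow ⟨x, rfl⟩]
  dsimp only
  rw [coeff_krawGen, coeff_krawGen,
    kraw_reflect_degree hx (Nat.le_of_lt_succ (Finset.mem_range.mp ht))]
  linear_combination -(kraw n t x ^ 2) * hsign

theorem krawSqSum_reflect {n x : ℕ} (hx : x ≤ n) : krawSqSum n (n - x) = krawSqSum n x :=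
  Finset.sum_congr rfl fun t _ => by
    rw [kraw_reflect_point hx, mul_pow, ← pow_mul, pow_mul', neg_one_sq, one_pow, one_mul]

theorem krawSqSum_central (u : ℕ) : krawSqSum (2 * u) u = (2 * u).choose u := by
  have hsq : krawGen (2 * u) u ^ 2 = expand ℤ 2 ((1 - X) ^ (2 * u)) := by
    rw [krawGen, show 2 * u - u = u by omega, map_pow, map_sub, map_one, expand_X, ← mul_pow]
    ring
  rw [krawSqSum_eq_coeff_sq (by omega), hsq, coeff_expand two_pos, if_pos (dvd_mul_right 2 u),
    Nat.mul_div_cancel_left u two_pos, coeff_one_sub_X_pow, ← mul_assoc, ← pow_add,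
    Even.neg_one_pow ⟨u, rfl⟩, one_mul]

theorem krawSqSum_succ {m x : ℕ} (hx : x < m) :
    (2 * (m : ℤ) - 2 * x - 1) * krawSqSum m (x + 1) = (2 * x + 1) * krawSqSum m x := by
  obtain rfl | ⟨k, rfl⟩ : m = 1 ∨ ∃ k, m = k + 2 := by
    rcases m with _ | _ | k <;> simp_all
  · obtain rfl : x = 0 := by omega
    decide
  -- Both squares are `(1 ± X)^2 * G`; `kraw_add_two` links the three coefficients of `G` involved.
  let G := krawGen (2 * k + 2) (2 * x)
  have hplus : krawGen (k + 2) x ^ 2 = (1 + C 2 * X + X * X) * G := by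
    unfold G krawGen
    rw [show k + 2 - x = (k + 1 - x) + 1 by omega,
      show 2 * k + 2 - 2 * x = 2 * (k + 1 - x) by omega, C_ofNat]
    ring
  have hminus : krawGen (k + 2) (x + 1) ^ 2 = (1 + C (-2) * X + X * X) * G := by
    unfold G krawGen
    rw [show k + 2 - (x + 1) = k + 1 - x by omega,
      show 2 * k + 2 - 2 * x = 2 * (k + 1 - x) by omega, C_neg, C_ofNat]
    ring
  have hcoeff (c : ℤ) : ((1 + C c * X + X * X) * G).coeff (k + 1 + 1)
      = G.coeff (k + 2) + c * G.coeff (k + 1) + G.coeff k := by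
    simp only [add_mul, one_mul, mul_assoc, coeff_add, coeff_C_mul, coeff_X_mul]
  have hrec := kraw_add_two (n := 2 * k + 2) (x := 2 * x) (by omega) k
  rw [krawSqSum_eq_coeff_sq hx.le, krawSqSum_eq_coeff_sq hx, hplus, hminus, hcoeff, hcoeff]
  simp only [G, coeff_krawGen, pow_succ]
  push_cast at hrec ⊢
  linear_combination (-2 * (-1 : ℤ) ^ x) * hrec

theorem krawSqSum_antitoneOn (m : ℕ) : AntitoneOn (krawSqSum m) (Set.Iic (m / 2)) := by
  refine antitoneOn_of_succ_le Set.ordConnected_Iic fun x _ _ hx => ?_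
  simp only [Order.succ_eq_add_one, Set.mem_Iic] at hx ⊢
  have hrec := krawSqSum_succ (m := m) (x := x) (by omega)
  have hm : 2 * (x : ℤ) + 2 ≤ m := by omega
  nlinarith [krawSqSum_nonneg m x, krawSqSum_nonneg m (x + 1)]

theorem krawSqSum_central_le {u x : ℕ} (hx : x ≤ 2 * u) :
    krawSqSum (2 * u) u ≤ krawSqSum (2 * u) x := by
  have hanti := krawSqSum_antitoneOn (2 * u)
  rw [Nat.mul_div_cancel_left u two_pos] at hanti
  rcases le_total x u with hxu | hux
  · exact hanti hxu Set.self_mem_Iic hxu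
  · rw [← krawSqSum_reflect hx]
    exact hanti (show 2 * u - x ≤ u by omega) Set.self_mem_Iic (by omega)

theorem lamHat_succ_succ (m x : ℕ) :
    lamHat (m + 1) (x + 1) = -((2 : ℝ) ^ (m + 1))⁻¹ * krawSqSum m x := by
  simp [lamHat, krawSqSum]

/-- Symmetry and extremality of the Krawtchouk coefficients of `λ`: for even `n`,
`λ̂_i = λ̂_{n−i+1}` (`1 ≤ i ≤ n/2`); for odd `n`, `λ̂_{(n+1)/2−i} = λ̂_{(n+1)/2+i}`
(`1 ≤ i ≤ (n−1)/2`) and `max_{1≤k≤n} λ̂_k = λ̂_{(n+1)/2} = −2^{−n}·C(n−1,(n−1)/2)`. -/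
theorem lamHat_symmetry (n : ℕ) :
    (Even n → ∀ i : ℕ, 1 ≤ i → i ≤ n / 2 → lamHat n i = lamHat n (n - i + 1))
    ∧ (Odd n →
        (∀ i : ℕ, 1 ≤ i → i ≤ (n - 1) / 2 →
          lamHat n ((n + 1) / 2 - i) = lamHat n ((n + 1) / 2 + i))
        ∧ (∀ k : ℕ, 1 ≤ k → k ≤ n → lamHat n k ≤ lamHat n ((n + 1) / 2))
        ∧ lamHat n ((n + 1) / 2)
            = -((2 : ℝ) ^ n)⁻¹ * Nat.choose (n - 1) ((n - 1) / 2)) := by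
  refine ⟨fun _ i hi hin => ?_, fun ⟨u, hu⟩ => ?_⟩
  · obtain ⟨m, rfl⟩ : ∃ m, n = m + 1 := ⟨n - 1, by omega⟩
    obtain ⟨j, rfl⟩ : ∃ j, i = j + 1 := ⟨i - 1, by omega⟩
    rw [show m + 1 - (j + 1) + 1 = (m - j) + 1 by omega, lamHat_succ_succ, lamHat_succ_succ,
      krawSqSum_reflect (by omega)]
  subst hu
  simp only [show (2 * u + 1 + 1) / 2 = u + 1 by omega, Nat.add_sub_cancel,
    Nat.mul_div_cancel_left u two_pos]
  refine ⟨fun i hi hiu => ?_, fun k hk hkn => ?_, ?_⟩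
  · rw [show u + 1 - i = (u - i) + 1 by omega, add_right_comm, lamHat_succ_succ, lamHat_succ_succ,
      ← krawSqSum_reflect (show u - i ≤ 2 * u by omega), show 2 * u - (u - i) = u + i by omega]
  · obtain ⟨j, rfl⟩ : ∃ j, k = j + 1 := ⟨k - 1, by omega⟩
    rw [lamHat_succ_succ, lamHat_succ_succ]
    refine mul_le_mul_of_nonpos_left ?_ (neg_nonpos.mpr (by positivity))
    exact_mod_cast krawSqSum_central_le (by omega)
  · rw [lamHat_succ_succ, krawSqSum_central]
    push_cast
    rfl
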